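/- arXiv:1602.03569 — 2 statements merged into one kernel-verified Lean document; each statement's English description precedes it below -/
import Mathlib

section
/- Let k ≥ 2 be an integer and let H = (V, E_2 ∪ … ∪ E_k) be a hypergraph with N vertices, where E_i is the set of edges of size i, and average degrees t_i^{i−1} := i·|E_i|/N for i = 2, …, k. Let T := max{t_i : 2 ≤ i ≤ k} and suppose T ≥ 1/2. Then α(H) ≥ (1/4)·(N/T). -/
/-!
Spencer's deletion argument. Keep each vertex independently with probability `p = 1/(2T) ≤ 1`.
The expected number of kept vertices is `Np`, and the expected number of edges inside the kept
set is `∑_e p^|e| = ∑_i |E_i| p^i = ∑_i N p (t_i p)^(i-1) / i ≤ N p ∑_{i ≥ 2} 2^(-i) ≤ Np/2`.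
Removing one vertex from each of these edges leaves an independent set, so some outcome gives
`α(H) ≥ Np - Np/2 = N/(4T)`. The random subset is realised as a weighted average over all
subsets `S`, with weight `p^|S| (1-p)^|Sᶜ|`.
-/

/-- The independence number of a hypergraph with edge set `E`. -/
noncomputable def indepNum {V : Type*} [DecidableEq V] (E : Finset (Finset V)) : ℕ :=
  sSup {m | ∃ I : Finset V, (∀ e ∈ E, ¬ e ⊆ I) ∧ I.card = m}

open Finset

section DeletionMethod

variable {V : Type*} [Fintype V] [DecidableEq V]

lemma le_indepNum (E : Finset (Finset V)) (I : Finset V) (hI : ∀ e ∈ E, ¬ e ⊆ I) :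
    #I ≤ indepNum E :=
  le_csSup ⟨Fintype.card V, fun _ ⟨J, _, hJ⟩ => hJ ▸ J.card_le_univ⟩ ⟨I, hI, rfl⟩

lemma card_le_indepNum_add_card_filter_subset {E : Finset (Finset V)}
    (hE : ∀ e ∈ E, e.Nonempty) (S : Finset V) : #S ≤ indepNum E + #{e ∈ E | e ⊆ S} := by
  set F := {e ∈ E | e ⊆ S}
  set A := F.attach.image fun e => (hE e.1 (mem_filter.1 e.2).1).choose
  have hindep : ∀ e ∈ E, ¬ e ⊆ S \ A := by
    intro e he hsub
    have heF : e ∈ F := mem_filter.2 ⟨he, hsub.trans sdiff_subset⟩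
    exact (mem_sdiff.1 (hsub (hE e he).choose_spec)).2
      (mem_image.2 ⟨⟨e, heF⟩, mem_attach _ _, rfl⟩)
  calc #S ≤ #(S \ A) + #A := card_le_card_sdiff_add_card
    _ ≤ indepNum E + #F :=
      add_le_add (le_indepNum E _ hindep) (card_image_le.trans_eq card_attach)

noncomputable def randomSubsetProb (p : ℝ) (S : Finset V) : ℝ := p ^ #S * (1 - p) ^ #Sᶜ

lemma randomSubsetProb_nonneg {p : ℝ} (hp0 : 0 ≤ p) (hp1 : p ≤ 1) (S : Finset V) :
    0 ≤ randomSubsetProb p S := by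
  have : 0 ≤ 1 - p := sub_nonneg.2 hp1
  unfold randomSubsetProb
  positivity

lemma sum_randomSubsetProb_filter_superset (p : ℝ) (e : Finset V) :
    ∑ S with e ⊆ S, randomSubsetProb p S = p ^ #e := by
  -- Expand `∏ v, (p + [v ∉ e] (1 - p))` over the subsets `S` of kept vertices.
  have hterm : ∀ S : Finset V, (if e ⊆ S then randomSubsetProb p S else 0)
      = (∏ _v ∈ S, p) * ∏ v ∈ univ \ S, (if v ∈ e then 0 else 1 - p) := by
    intro S
    split_ifs with h
    · rw [prod_const, prod_ite_of_false fun v hv hve => (mem_sdiff.1 hv).2 (h hve), prod_const,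
        ← compl_eq_univ_sdiff, randomSubsetProb]
    · obtain ⟨v, hve, hvS⟩ := not_subset.1 h
      rw [Finset.prod_eq_zero (f := fun v => if v ∈ e then 0 else 1 - p)
        (mem_sdiff.2 ⟨mem_univ v, hvS⟩) (if_pos hve), mul_zero]
  calc ∑ S with e ⊆ S, randomSubsetProb p S
      = ∑ S ∈ univ.powerset, (∏ _v ∈ S, p) * ∏ v ∈ univ \ S, (if v ∈ e then 0 else 1 - p) := by
        rw [sum_filter, powerset_univ]
        exact sum_congr rfl fun S _ => hterm S
    _ = ∏ v, (p + if v ∈ e then 0 else 1 - p) := (prod_add _ _ _).symm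
    _ = ∏ v, if v ∈ e then p else 1 := prod_congr rfl fun v _ => by split_ifs <;> ring
    _ = p ^ #e := by rw [prod_ite_mem, univ_inter, prod_const]

lemma sum_randomSubsetProb (p : ℝ) : ∑ S : Finset V, randomSubsetProb p S = 1 := by
  simpa using sum_randomSubsetProb_filter_superset (V := V) p ∅

lemma sum_randomSubsetProb_mul_card_filter_subset (p : ℝ) (E : Finset (Finset V)) :
    ∑ S, randomSubsetProb p S * #{e ∈ E | e ⊆ S} = ∑ e ∈ E, p ^ #e := by
  simp_rw [card_filter, Nat.cast_sum, mul_sum]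
  rw [sum_comm]
  refine sum_congr rfl fun e _ => ?_
  rw [← sum_randomSubsetProb_filter_superset p e, sum_filter]
  simp

lemma sum_randomSubsetProb_mul_card (p : ℝ) :
    ∑ S : Finset V, randomSubsetProb p S * #S = Fintype.card V * p := by
  have hcard : ∀ S : Finset V, (#S : ℝ) = ∑ v, if {v} ⊆ S then 1 else 0 := by
    intro S
    simp
  simp_rw [hcard, mul_sum]
  rw [sum_comm]
  simp_rw [mul_ite, mul_one, mul_zero, ← sum_filter, sum_randomSubsetProb_filter_superset,
    card_singleton, pow_one, sum_const, card_univ, nsmul_eq_mul]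

theorem card_mul_sub_sum_pow_le_indepNum {E : Finset (Finset V)} (hE : ∀ e ∈ E, e.Nonempty)
    {p : ℝ} (hp0 : 0 ≤ p) (hp1 : p ≤ 1) :
    Fintype.card V * p - ∑ e ∈ E, p ^ #e ≤ indepNum E := by
  set gain : Finset V → ℝ := fun S => #S - #{e ∈ E | e ⊆ S}
  obtain ⟨S, -, hS⟩ := exists_max_image univ gain univ_nonempty
  calc Fintype.card V * p - ∑ e ∈ E, p ^ #e = ∑ R, randomSubsetProb p R * gain R := by
        simp only [gain, mul_sub, sum_sub_distrib, sum_randomSubsetProb_mul_card,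
          sum_randomSubsetProb_mul_card_filter_subset]
    _ ≤ ∑ R, randomSubsetProb p R * gain S :=
        sum_le_sum fun R _ =>
          mul_le_mul_of_nonneg_left (hS R (mem_univ R)) (randomSubsetProb_nonneg hp0 hp1 R)
    _ = gain S := by rw [← sum_mul, sum_randomSubsetProb, one_mul]
    _ ≤ indepNum E := by
        have := card_le_indepNum_add_card_filter_subset hE S
        simp only [gain, sub_le_iff_le_add]
        exact_mod_cast this

end DeletionMethod

lemma sum_Icc_two_half_pow_le (k : ℕ) : ∑ i ∈ Icc 2 k, (1 / 2 : ℝ) ^ i ≤ 1 / 2 := by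
  rw [← Ico_add_one_right_eq_Icc]
  refine (geom_sum_Ico_le_of_lt_one (by norm_num) (by norm_num)).trans_eq ?_
  norm_num

lemma mul_pow_le_mul_half_pow {c N t p : ℝ} {i : ℕ} (hN : 0 < N) (hi : 2 ≤ i) (ht : 0 ≤ t)
    (hp : 0 ≤ p) (htp : t * p ≤ 1 / 2) (hc : t ^ (i - 1) = i * c / N) :
    c * p ^ i ≤ N * p * (1 / 2) ^ i := by
  obtain ⟨j, rfl⟩ : ∃ j, i = j + 1 := ⟨i - 1, by omega⟩
  rw [Nat.add_sub_cancel] at hc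
  push_cast at hc ⊢
  have hj2 : (2 : ℝ) ≤ j + 1 := by exact_mod_cast hi
  calc c * p ^ (j + 1) = N * p * (t * p) ^ j / (j + 1) := by
        rw [eq_div_iff (by positivity), mul_pow, pow_succ, hc]
        field_simp
    _ ≤ N * p * (1 / 2) ^ j / 2 :=
        div_le_div₀ (by positivity)
          (mul_le_mul_of_nonneg_left (pow_le_pow_left₀ (by positivity) htp j) (by positivity))
          (by norm_num) hj2
    _ = N * p * (1 / 2) ^ (j + 1) := by ring

lemma sum_pow_card_le_of_card_filter_mul_pow_le {V : Type*} {E : Finset (Finset V)} {k : ℕ}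
    (hE : ∀ e ∈ E, #e ∈ Icc 2 k) {p C : ℝ} (hC : 0 ≤ C)
    (hsize : ∀ i ∈ Icc 2 k, #{e ∈ E | #e = i} * p ^ i ≤ C * (1 / 2) ^ i) :
    ∑ e ∈ E, p ^ #e ≤ C / 2 :=
  calc ∑ e ∈ E, p ^ #e = ∑ i ∈ Icc 2 k, #{e ∈ E | #e = i} * p ^ i := by
        rw [← sum_fiberwise_of_maps_to' hE]
        simp_rw [sum_const, nsmul_eq_mul]
    _ ≤ ∑ i ∈ Icc 2 k, C * (1 / 2) ^ i := sum_le_sum hsize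
    _ ≤ C / 2 := by
        rw [← mul_sum]
        exact (mul_le_mul_of_nonneg_left (sum_Icc_two_half_pow_le k) hC).trans_eq (by ring)

theorem stmt8_general (k N : ℕ) (hN : 0 < N)
    (E : Finset (Finset (Fin N))) (hE : ∀ e ∈ E, 2 ≤ e.card ∧ e.card ≤ k)
    (t : ℕ → ℝ)
    (ht : ∀ i : ℕ, 2 ≤ i → i ≤ k → 0 ≤ t i ∧
      t i ^ (i - 1) = (i : ℝ) * (E.filter fun e => e.card = i).card / N)
    (T : ℝ)
    (hTmax : ∀ i : ℕ, 2 ≤ i → i ≤ k → t i ≤ T)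
    (hT : 1 / 2 ≤ T) :
    1 / 4 * ((N : ℝ) / T) ≤ (indepNum E : ℝ) := by
  have hN0 : (0 : ℝ) < N := by exact_mod_cast hN
  have hT0 : 0 < T := by linarith
  set p : ℝ := 1 / (2 * T) with hp
  have hp0 : 0 ≤ p := by positivity
  have hp1 : p ≤ 1 := by
    rw [hp, div_le_one (by positivity)]
    linarith
  have hTp : T * p = 1 / 2 := by
    rw [hp]
    field_simp
  have hsum : ∑ e ∈ E, p ^ #e ≤ N * p / 2 := by
    refine sum_pow_card_le_of_card_filter_mul_pow_le (fun e he => mem_Icc.2 (hE e he))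
      (by positivity) fun i hi => ?_
    obtain ⟨hi2, hik⟩ := mem_Icc.1 hi
    obtain ⟨ht0, hti⟩ := ht i hi2 hik
    exact mul_pow_le_mul_half_pow hN0 hi2 ht0 hp0
      ((mul_le_mul_of_nonneg_right (hTmax i hi2 hik) hp0).trans_eq hTp) hti
  have hα := card_mul_sub_sum_pow_le_indepNum (E := E)
    (fun e he => card_pos.1 (two_pos.trans_le (hE e he).1)) hp0 hp1
  rw [Fintype.card_fin] at hα
  calc 1 / 4 * ((N : ℝ) / T) = N * p - N * p / 2 := by
        rw [hp]
        field_simp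
        ring
    _ ≤ indepNum E := by linarith

/-- Spencer's bound for non-uniform hypergraphs: if `H` has `N` vertices and edges of
sizes `2,…,k` with average degrees `t_i^{i-1} = i|E_i|/N`, and `T = max t_i ≥ 1/2`,
then `α(H) ≥ (1/4)(N/T)`. -/
theorem stmt8 (k N : ℕ) (hk : 2 ≤ k) (hN : 0 < N)
    (E : Finset (Finset (Fin N))) (hE : ∀ e ∈ E, 2 ≤ e.card ∧ e.card ≤ k)
    (t : ℕ → ℝ)
    (ht : ∀ i : ℕ, 2 ≤ i → i ≤ k → 0 ≤ t i ∧
      t i ^ (i - 1) = (i : ℝ) * (E.filter fun e => e.card = i).card / N)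
    (T : ℝ)
    (hTmax : ∀ i : ℕ, 2 ≤ i → i ≤ k → t i ≤ T)
    (hTattain : ∃ i : ℕ, 2 ≤ i ∧ i ≤ k ∧ T = t i)
    (hT : 1 / 2 ≤ T) :
    1 / 4 * ((N : ℝ) / T) ≤ (indepNum E : ℝ) :=
  stmt8_general k N hN E hE t ht T hTmax hT
end

section
/- Let k ≥ 2 be an integer, let T ≥ e and N ≥ 1 be reals, and let c_2, …, c_k > 0. Let H = (V, E_2 ∪ … ∪ E_k) be a linear hypergraph with |V| ≤ N such that for every vertex v ∈ V and every i ∈ {2, …, k}, the number d_i(v) of size-i edges containing v satisfies d_i(v) ≤ k·c_i·T^{i−1}·(ln T)^{(k−i)/(k−1)}. Then for all integers 2 ≤ g ≤ h ≤ i ≤ j ≤ k, the number of 4-cycles {E_1, E_2, E_3, E_4} in H with |E_1| = g, |E_2| = h, |E_3| = i, |E_4| = j such that no three of the four edges form a 3-cycle is less than 3·N·k^6·c_g·c_h·c_i·T^{g+h+i−3}·(ln T)^3. -/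
/-- A `j`-cycle in the hypergraph with edge set `E`: pairwise distinct edges
`e 0, …, e (j-1)` and pairwise distinct vertices `v 0, …, v (j-1)` with
`v i ∈ e i ∩ e (i+1)` (cyclically). -/
def HasCycle {V : Type*} [DecidableEq V] (E : Finset (Finset V)) (j : ℕ) : Prop :=
  ∃ (e : ZMod j → Finset V) (v : ZMod j → V),
    Function.Injective e ∧ Function.Injective v ∧
    (∀ i, e i ∈ E) ∧ (∀ i, v i ∈ e i ∧ v i ∈ e (i + 1))

/-- A hypergraph is linear if it has no 2-cycles. -/
def Linear {V : Type*} [DecidableEq V] (E : Finset (Finset V)) : Prop :=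
  ¬ HasCycle E 2

/-- Three pairwise distinct edges forming a 3-cycle: there are pairwise distinct vertices
`v₁ ∈ e₁ ∩ e₂`, `v₂ ∈ e₂ ∩ e₃`, `v₃ ∈ e₃ ∩ e₁`. -/
def IsCycle3 {V : Type*} [DecidableEq V] (e₁ e₂ e₃ : Finset V) : Prop :=
  e₁ ≠ e₂ ∧ e₁ ≠ e₃ ∧ e₂ ≠ e₃ ∧
  ∃ v₁ v₂ v₃ : V, v₁ ≠ v₂ ∧ v₁ ≠ v₃ ∧ v₂ ≠ v₃ ∧
    v₁ ∈ e₁ ∩ e₂ ∧ v₂ ∈ e₂ ∩ e₃ ∧ v₃ ∈ e₃ ∩ e₁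

/-- Four pairwise distinct edges forming a 4-cycle: there are pairwise distinct vertices
`v₁ ∈ e₁ ∩ e₂`, `v₂ ∈ e₂ ∩ e₃`, `v₃ ∈ e₃ ∩ e₄`, `v₄ ∈ e₄ ∩ e₁`. -/
def IsCycle4 {V : Type*} [DecidableEq V] (e₁ e₂ e₃ e₄ : Finset V) : Prop :=
  e₁ ≠ e₂ ∧ e₁ ≠ e₃ ∧ e₁ ≠ e₄ ∧ e₂ ≠ e₃ ∧ e₂ ≠ e₄ ∧ e₃ ≠ e₄ ∧
  ∃ v₁ v₂ v₃ v₄ : V,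
    v₁ ≠ v₂ ∧ v₁ ≠ v₃ ∧ v₁ ≠ v₄ ∧ v₂ ≠ v₃ ∧ v₂ ≠ v₄ ∧ v₃ ≠ v₄ ∧
    v₁ ∈ e₁ ∩ e₂ ∧ v₂ ∈ e₂ ∩ e₃ ∧ v₃ ∈ e₃ ∩ e₄ ∧ v₄ ∈ e₄ ∩ e₁

/-!
Root a 4-cycle `e₁ e₂ e₃ e₄` at a vertex `v ∈ e₁ ∩ e₂`. There are at most `N` roots,
`d_g(v) d_h(v)` choices of `e₁, e₂`, `h` choices of `w ∈ e₂ ∩ e₃`, `d_i(w)` choices of `e₃`,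
and `i g` choices of distinct `v₃ ∈ e₃`, `v₄ ∈ e₁`; by linearity `v₃, v₄` determine `e₄`.
Each logarithmic exponent `(k - m)/(k - 1)` is at most `1`, whence the factor `(ln T)³`.
-/

open Finset

theorem Finset.cast_card_biUnion_le_mul {β γ : Type*} [DecidableEq γ] {s : Finset β}
    {f : β → Finset γ} {B M : ℝ} (hs : (#s : ℝ) ≤ B) (hM : 0 ≤ M)
    (hf : ∀ a ∈ s, (#(f a) : ℝ) ≤ M) : (#(s.biUnion f) : ℝ) ≤ B * M :=
  calc (#(s.biUnion f) : ℝ) ≤ ∑ a ∈ s, (#(f a) : ℝ) := by exact_mod_cast card_biUnion_le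
    _ ≤ #s * M := by simpa using sum_le_sum hf
    _ ≤ B * M := by gcongr

theorem Set.ncard_le_card_of_subset_image {β γ : Type*} {S : Set γ} {t : Finset β}
    (f : β → γ) (hS : S ⊆ f '' t) : S.ncard ≤ #t :=
  ((Set.ncard_le_ncard hS (t.finite_toSet.image f)).trans
    (Set.ncard_image_le t.finite_toSet)).trans_eq (Set.ncard_coe_finset t)

theorem injective_vecCons_two {β : Type*} {a b : β} (hab : a ≠ b) :
    Function.Injective (![a, b] : ZMod 2 → β) := by
  intro x y hxy
  fin_cases x <;> fin_cases y
  all_goals first | rfl | simp at hxy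
  all_goals tauto

section Hypergraph

variable {α : Type*} [DecidableEq α]

theorem Linear.eq_of_mem_of_mem {E : Finset (Finset α)} (hlin : Linear E) {e f : Finset α}
    (he : e ∈ E) (hf : f ∈ E) {x y : α} (hxy : x ≠ y)
    (hxe : x ∈ e) (hye : y ∈ e) (hxf : x ∈ f) (hyf : y ∈ f) : e = f := by
  by_contra hef
  refine hlin ⟨![e, f], ![x, y], injective_vecCons_two hef, injective_vecCons_two hxy, ?_, ?_⟩
  · intro a; fin_cases a
    exacts [he, hf]
  · intro a; fin_cases a
    exacts [⟨hxe, hxf⟩, ⟨hyf, hye⟩]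

def edgesThrough (E : Finset (Finset α)) (m : ℕ) (v : α) : Finset (Finset α) :=
  E.filter fun e => e.card = m ∧ v ∈ e

def edgesMeeting (E : Finset (Finset α)) (s t : Finset α) : Finset (Finset α) :=
  E.filter fun e => ∃ x ∈ s, ∃ y ∈ t, x ≠ y ∧ x ∈ e ∧ y ∈ e

theorem Linear.card_edgesMeeting_le {E : Finset (Finset α)} (hlin : Linear E)
    (s t : Finset α) : #(edgesMeeting E s t) ≤ #s * #t := by
  have hsub : edgesMeeting E s t ⊆
      (s ×ˢ t).biUnion fun p => E.filter fun e => p.1 ≠ p.2 ∧ p.1 ∈ e ∧ p.2 ∈ e := by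
    intro e he
    obtain ⟨heE, x, hx, y, hy, hxy, hxe, hye⟩ := mem_filter.mp he
    exact mem_biUnion.mpr ⟨(x, y), mem_product.mpr ⟨hx, hy⟩, mem_filter.mpr ⟨heE, hxy, hxe, hye⟩⟩
  refine (card_le_card hsub).trans (card_biUnion_le_card_mul _ _ 1 fun p _ => ?_) |>.trans
    (by rw [card_product, mul_one])
  refine card_le_one.mpr fun e he f hf => ?_
  obtain ⟨heE, hxy, hxe, hye⟩ := mem_filter.mp he
  obtain ⟨hfE, -, hxf, hyf⟩ := mem_filter.mp hf
  exact hlin.eq_of_mem_of_mem heE hfE hxy hxe hye hxf hyf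

def fourCycleCandidates (V : Finset α) (E : Finset (Finset α)) (g h i : ℕ) :
    Finset (Finset α × Finset α × Finset α × Finset α) :=
  V.biUnion fun v => (edgesThrough E g v).biUnion fun e₁ =>
    (edgesThrough E h v).biUnion fun e₂ => e₂.biUnion fun w =>
      (edgesThrough E i w).biUnion fun e₃ =>
        (edgesMeeting E e₃ e₁).image fun e₄ => (e₁, e₂, e₃, e₄)

theorem mem_fourCycleCandidates {V : Finset α} {E : Finset (Finset α)} {g h i : ℕ}
    {e₁ e₂ e₃ e₄ : Finset α} (he₁ : e₁ ∈ E) (he₂ : e₂ ∈ E) (he₃ : e₃ ∈ E) (he₄ : e₄ ∈ E)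
    (he₁V : e₁ ⊆ V) (hcyc : IsCycle4 e₁ e₂ e₃ e₄)
    (hg : #e₁ = g) (hh : #e₂ = h) (hi : #e₃ = i) :
    (e₁, e₂, e₃, e₄) ∈ fourCycleCandidates V E g h i := by
  obtain ⟨-, -, -, -, -, -, v₁, v₂, v₃, v₄, -, -, -, -, -, hv₃₄, hv₁, hv₂, hv₃, hv₄⟩ := hcyc
  simp only [mem_inter] at hv₁ hv₂ hv₃ hv₄
  simp only [fourCycleCandidates, edgesThrough, edgesMeeting, mem_biUnion, mem_image,
    mem_filter]
  exact ⟨v₁, he₁V hv₁.1, e₁, ⟨he₁, hg, hv₁.1⟩, e₂, ⟨he₂, hh, hv₁.2⟩, v₂, hv₂.1, e₃,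
    ⟨he₃, hi, hv₂.2⟩, e₄, ⟨he₄, v₃, hv₃.1, v₄, hv₄.2, hv₃₄, hv₃.2, hv₄.1⟩, rfl⟩

theorem card_fourCycleCandidates_le {V : Finset α} {E : Finset (Finset α)} (hlin : Linear E)
    (hEV : ∀ e ∈ E, e ⊆ V) {g h i : ℕ} {N : ℝ} {D : ℕ → ℝ} (hVN : (#V : ℝ) ≤ N)
    (hD : ∀ m ∈ ({g, h, i} : Finset ℕ), 0 ≤ D m ∧ ∀ v ∈ V, (#(edgesThrough E m v) : ℝ) ≤ D m) :
    (#(fourCycleCandidates V E g h i) : ℝ) ≤ N * (D g * (D h * (h * (D i * (i * g))))) := by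
  obtain ⟨hDg, hgV⟩ := hD g (by simp)
  obtain ⟨hDh, hhV⟩ := hD h (by simp)
  obtain ⟨hDi, hiV⟩ := hD i (by simp)
  refine cast_card_biUnion_le_mul hVN (by positivity) fun v hv => ?_
  refine cast_card_biUnion_le_mul (hgV v hv) (by positivity) fun e₁ he₁ => ?_
  refine cast_card_biUnion_le_mul (hhV v hv) (by positivity) fun e₂ he₂ => ?_
  obtain ⟨he₂E, he₂h, -⟩ := mem_filter.mp he₂
  refine cast_card_biUnion_le_mul (by rw [he₂h]) (by positivity) fun w hw => ?_
  refine cast_card_biUnion_le_mul (hiV w (hEV e₂ he₂E hw)) (by positivity) fun e₃ he₃ => ?_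
  rw [← (mem_filter.mp he₁).2.1, ← (mem_filter.mp he₃).2.1]
  exact_mod_cast card_image_le.trans (hlin.card_edgesMeeting_le e₃ e₁)

end Hypergraph

noncomputable def degreeBound (k : ℕ) (c : ℕ → ℝ) (T : ℝ) (m : ℕ) : ℝ :=
  k * c m * T ^ (m - 1) * Real.log T ^ (((k : ℝ) - m) / ((k : ℝ) - 1))

theorem degreeBound_le {k m : ℕ} {c : ℕ → ℝ} {T : ℝ} (hm : 1 ≤ m) (hmk : m ≤ k)
    (hc : 0 ≤ c m) (hT : Real.exp 1 ≤ T) :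
    degreeBound k c T m ≤ k * c m * T ^ (m - 1) * Real.log T := by
  have hT0 : 0 < T := (Real.exp_pos 1).trans_le hT
  have hL : 1 ≤ Real.log T := (Real.le_log_iff_exp_le hT0).mpr hT
  have hexp : ((k : ℝ) - m) / ((k : ℝ) - 1) ≤ 1 := by
    have : (1 : ℝ) ≤ m := by exact_mod_cast hm
    have : (m : ℝ) ≤ k := by exact_mod_cast hmk
    exact div_le_one_of_le₀ (by linarith) (by linarith)
  unfold degreeBound
  gcongr
  simpa using Real.rpow_le_rpow_of_exponent_le hL hexp

theorem degreeBound_nonneg {k m : ℕ} {c : ℕ → ℝ} {T : ℝ} (hc : 0 ≤ c m) (hT : 1 ≤ T) :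
    0 ≤ degreeBound k c T m := by
  have := Real.log_nonneg hT
  unfold degreeBound
  positivity

theorem mul_degreeBound_le {k g h i : ℕ} {c : ℕ → ℝ} {T N : ℝ} (hN : 0 ≤ N)
    (hT : Real.exp 1 ≤ T) (hg : 1 ≤ g) (hgk : g ≤ k) (hh : 1 ≤ h) (hhk : h ≤ k)
    (hi : 1 ≤ i) (hik : i ≤ k) (hcg : 0 ≤ c g) (hch : 0 ≤ c h) (hci : 0 ≤ c i) :
    N * (degreeBound k c T g * (degreeBound k c T h * (h * (degreeBound k c T i * (i * g))))) ≤
      N * (k : ℝ) ^ 6 * c g * c h * c i * T ^ (g + h + i - 3) * Real.log T ^ 3 := by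
  have hT1 : 1 ≤ T := by linarith [Real.add_one_le_exp 1]
  have hL : 1 ≤ Real.log T := (Real.le_log_iff_exp_le (by linarith)).mpr hT
  have := degreeBound_le hg hgk hcg hT
  have := degreeBound_le hh hhk hch hT
  have := degreeBound_le hi hik hci hT
  have := degreeBound_nonneg (k := k) hcg hT1
  have := degreeBound_nonneg (k := k) hch hT1
  have := degreeBound_nonneg (k := k) hci hT1
  have hhk' : (h : ℝ) ≤ k := by exact_mod_cast hhk
  have hik' : (i : ℝ) ≤ k := by exact_mod_cast hik
  have hgk' : (g : ℝ) ≤ k := by exact_mod_cast hgk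
  calc _ ≤ N * ((k * c g * T ^ (g - 1) * Real.log T) * ((k * c h * T ^ (h - 1) * Real.log T) *
          (k * ((k * c i * T ^ (i - 1) * Real.log T) * (k * k))))) := by gcongr
    _ = N * (k : ℝ) ^ 6 * c g * c h * c i * (T ^ (g - 1 + (h - 1) + (i - 1))) *
          Real.log T ^ 3 := by rw [pow_add, pow_add]; ring
    _ = _ := by congr 3; omega

theorem stmt15_general {α : Type*} [DecidableEq α] (k : ℕ) (T N : ℝ)
    (hT : Real.exp 1 ≤ T) (hN : 1 ≤ N)
    (c : ℕ → ℝ) (hc : ∀ i : ℕ, 2 ≤ i → i ≤ k → 0 < c i)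
    (V : Finset α) (hVN : (V.card : ℝ) ≤ N)
    (E : Finset (Finset α)) (hEV : ∀ e ∈ E, e ⊆ V)
    (hlin : Linear E)
    (hdeg : ∀ v ∈ V, ∀ i : ℕ, 2 ≤ i → i ≤ k →
      ((E.filter fun e => e.card = i ∧ v ∈ e).card : ℝ) ≤
        (k : ℝ) * c i * T ^ (i - 1) * Real.log T ^ (((k : ℝ) - i) / ((k : ℝ) - 1)))
    (g h i j : ℕ) (hg : 2 ≤ g) (hgh : g ≤ h) (hhi : h ≤ i) (hij : i ≤ j) (hjk : j ≤ k) :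
    (Set.ncard {s : Finset (Finset α) | ∃ e₁ e₂ e₃ e₄ : Finset α,
        s = {e₁, e₂, e₃, e₄} ∧ e₁ ∈ E ∧ e₂ ∈ E ∧ e₃ ∈ E ∧ e₄ ∈ E ∧
        IsCycle4 e₁ e₂ e₃ e₄ ∧
        e₁.card = g ∧ e₂.card = h ∧ e₃.card = i ∧ e₄.card = j ∧
        (∀ f₁ ∈ ({e₁, e₂, e₃, e₄} : Finset (Finset α)),
          ∀ f₂ ∈ ({e₁, e₂, e₃, e₄} : Finset (Finset α)),
          ∀ f₃ ∈ ({e₁, e₂, e₃, e₄} : Finset (Finset α)),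
            ¬ IsCycle3 f₁ f₂ f₃)} : ℝ) <
      3 * N * (k : ℝ) ^ 6 * c g * c h * c i * T ^ (g + h + i - 3) * Real.log T ^ 3 := by
  have hgk : g ≤ k := by omega
  have hhk : h ≤ k := by omega
  have hik : i ≤ k := by omega
  have hsizes : ∀ m ∈ ({g, h, i} : Finset ℕ), 2 ≤ m ∧ m ≤ k := by
    simp only [mem_insert, mem_singleton]; omega
  have hcg := hc g hg hgk
  have hch := hc h (by omega) hhk
  have hci := hc i (by omega) hik
  have hT1 : 1 < T := by linarith [Real.add_one_lt_exp one_ne_zero]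
  have hpos : 0 < N * (k : ℝ) ^ 6 * c g * c h * c i * T ^ (g + h + i - 3) * Real.log T ^ 3 := by
    have := Real.log_pos hT1
    have : 0 < k := by omega
    have : 0 < N := by linarith
    have : 0 < T := by linarith
    positivity
  calc (Set.ncard _ : ℝ) ≤ #(fourCycleCandidates V E g h i) := by
        refine Nat.cast_le.mpr <| Set.ncard_le_card_of_subset_image
          (fun t => ({t.1, t.2.1, t.2.2.1, t.2.2.2} : Finset (Finset α))) ?_
        rintro _ ⟨e₁, e₂, e₃, e₄, rfl, he₁, he₂, he₃, he₄, hcyc, hg, hh, hi, -⟩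
        exact ⟨_, mem_fourCycleCandidates he₁ he₂ he₃ he₄ (hEV e₁ he₁) hcyc hg hh hi, rfl⟩
    _ ≤ N * (degreeBound k c T g * (degreeBound k c T h *
          (h * (degreeBound k c T i * (i * g))))) :=
        card_fourCycleCandidates_le hlin hEV hVN fun m hm =>
          ⟨degreeBound_nonneg (hc m (hsizes m hm).1 (hsizes m hm).2).le hT1.le,
            fun v hv => hdeg v hv m (hsizes m hm).1 (hsizes m hm).2⟩
    _ ≤ N * (k : ℝ) ^ 6 * c g * c h * c i * T ^ (g + h + i - 3) * Real.log T ^ 3 :=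
        mul_degreeBound_le (by linarith) hT (by omega) hgk (by omega) hhk (by omega) hik
          hcg.le hch.le hci.le
    _ < 3 * N * (k : ℝ) ^ 6 * c g * c h * c i * T ^ (g + h + i - 3) * Real.log T ^ 3 := by
        linarith

/-- Counting 4-cycles (no three edges of which form a 3-cycle) with prescribed edge
sizes in a linear hypergraph with bounded degrees. -/
theorem stmt15 {α : Type*} [DecidableEq α] (k : ℕ) (hk : 2 ≤ k) (T N : ℝ)
    (hT : Real.exp 1 ≤ T) (hN : 1 ≤ N)
    (c : ℕ → ℝ) (hc : ∀ i : ℕ, 2 ≤ i → i ≤ k → 0 < c i)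
    (V : Finset α) (hVN : (V.card : ℝ) ≤ N)
    (E : Finset (Finset α)) (hEV : ∀ e ∈ E, e ⊆ V)
    (hE : ∀ e ∈ E, 2 ≤ e.card ∧ e.card ≤ k)
    (hlin : Linear E)
    (hdeg : ∀ v ∈ V, ∀ i : ℕ, 2 ≤ i → i ≤ k →
      ((E.filter fun e => e.card = i ∧ v ∈ e).card : ℝ) ≤
        (k : ℝ) * c i * T ^ (i - 1) * Real.log T ^ (((k : ℝ) - i) / ((k : ℝ) - 1)))
    (g h i j : ℕ) (hg : 2 ≤ g) (hgh : g ≤ h) (hhi : h ≤ i) (hij : i ≤ j) (hjk : j ≤ k) :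
    (Set.ncard {s : Finset (Finset α) | ∃ e₁ e₂ e₃ e₄ : Finset α,
        s = {e₁, e₂, e₃, e₄} ∧ e₁ ∈ E ∧ e₂ ∈ E ∧ e₃ ∈ E ∧ e₄ ∈ E ∧
        IsCycle4 e₁ e₂ e₃ e₄ ∧
        e₁.card = g ∧ e₂.card = h ∧ e₃.card = i ∧ e₄.card = j ∧
        (∀ f₁ ∈ ({e₁, e₂, e₃, e₄} : Finset (Finset α)),
          ∀ f₂ ∈ ({e₁, e₂, e₃, e₄} : Finset (Finset α)),
          ∀ f₃ ∈ ({e₁, e₂, e₃, e₄} : Finset (Finset α)),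
            ¬ IsCycle3 f₁ f₂ f₃)} : ℝ) <
      3 * N * (k : ℝ) ^ 6 * c g * c h * c i * T ^ (g + h + i - 3) * Real.log T ^ 3 :=
  stmt15_general k T N hT hN c hc V hVN E hEV hlin hdeg g h i j hg hgh hhi hij hjk
end
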